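/- Let M be a log-convex sequence with M₀ = 1 and quotients m_j := M_{j+1}/M_j, let L be a positive sequence with L₀ = 1, let 0 < α ≤ 2, and let f ∈ A_{{L}}(S_α) be such that for every j ∈ ℕ₀ the limit f^{(j)}(0) := lim_{z→0, z∈S_α} f^{(j)}(z) exists and the sequence (|f^{(j)}(0)|)_j is equivalent to L. Then the sequence of moduli of the limits at 0 of the derivatives of T_M(f) (which equal R_j·|f^{(j)}(0)| with R_j := ∑_{n=0}^∞ 2^{-n}·(M_n/m_n^n)·m_n^j) is equivalent to LM := (L_j·M_j)_j, and T_M(f) is characteristic in A_{{LM}}(S_α). -/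

import Mathlib

/-!
Log-convexity of `M` gives `M_n m_n^j ≤ M_j m_n^n` for all `n, j`, so the series
`R_j = ∑ 2^{-n} (M_n / m_n^n) m_n^j` lies between its `n = j` term `2^{-j} M_j` and `2 M_j`:
`R` is equivalent to `M`. The same bound dominates the `j`-times termwise differentiated series of
`T_M f` by `2^{-n} M_j sup |f^{(j)}|`, which gives `T_M f ∈ A_{{LM}}` and, by dominated
convergence, the boundary values `R_j f^{(j)}(0)`; their moduli are equivalent to `L_j M_j`.
If `T_M f ∈ A_{{N}}`, these boundary values are bounded by `C h^j N_j`, hence `L_j M_j ≲ N_j`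
and `A_{{LM}} ⊆ A_{{N}}`.
-/

open Filter Complex Asymptotics
open scoped Topology BigOperators

noncomputable section

/-- The open sector in ℂ of opening `α·π` bisected by the positive real axis. -/
def Sector (α : ℝ) : Set ℂ := {z : ℂ | z ≠ 0 ∧ |Complex.arg z| < α * Real.pi / 2}

/-- The Roumieu ultraholomorphic class `A_{{M}}(S_α)`. -/
def ASet (M : ℕ → ℝ) (α : ℝ) : Set (ℂ → ℂ) :=
  {f | DifferentiableOn ℂ f (Sector α) ∧
    ∃ h > (0:ℝ), ∃ C : ℝ, ∀ j : ℕ, ∀ z ∈ Sector α,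
      ‖iteratedDerivWithin j f (Sector α) z‖ ≤ C * h ^ j * M j}

/-- Equivalence of sequences: `a_j ≤ A·B^j·b_j` and `b_j ≤ A·B^j·a_j`. -/
def SeqEquiv (a b : ℕ → ℝ) : Prop :=
  ∃ A > (0:ℝ), ∃ B > (0:ℝ), ∀ j : ℕ, a j ≤ A * B ^ j * b j ∧ b j ≤ A * B ^ j * a j

/-- Log-convexity: `L_j² ≤ L_{j-1}·L_{j+1}` for `j ≥ 1`. -/
def IsLogConvexSeq (L : ℕ → ℝ) : Prop := ∀ j : ℕ, L (j+1) ^ 2 ≤ L j * L (j+2)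

/-- `Gbar s j = j^{s·j}` (with the convention `0⁰ = 1`, automatic for `rpow`). -/
def Gbar (s : ℝ) (j : ℕ) : ℝ := (j : ℝ) ^ (s * (j : ℝ))

/-- Weight matrix: positive sequences, first term 1, nondecreasing in the parameter. -/
def IsWeightMatrix (M : ℝ → ℕ → ℝ) : Prop :=
  (∀ p > (0:ℝ), ∀ j : ℕ, 0 < M p j) ∧ (∀ p > (0:ℝ), M p 0 = 1) ∧
    (∀ p q : ℝ, 0 < p → p ≤ q → ∀ j : ℕ, M p j ≤ M q j)

/-- The class `A_{{𝓜}}(S_α)` associated with a weight matrix. -/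
def AMatSet (M : ℝ → ℕ → ℝ) (α : ℝ) : Set (ℂ → ℂ) := {f | ∃ p > (0:ℝ), f ∈ ASet (M p) α}

/-- `M̌_j = M_j/j!`. -/
def checkSeq (N : ℕ → ℝ) (j : ℕ) : ℝ := N j / (Nat.factorial j : ℝ)

/-- Condition `(𝓜_{rai})`. -/
def Mrai (M : ℝ → ℕ → ℝ) : Prop :=
  ∀ p > (0:ℝ), ∃ C > (0:ℝ), ∃ p' > (0:ℝ), ∀ j k : ℕ, 1 ≤ j → j ≤ k →
    (checkSeq (M p) j) ^ ((j:ℝ)⁻¹) ≤ C * (checkSeq (M p') k) ^ ((k:ℝ)⁻¹)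

/-- Condition `(𝓜_{C^ω})`. -/
def MComega (M : ℝ → ℕ → ℝ) : Prop :=
  ∃ p > (0:ℝ),
    0 < Filter.liminf (fun j : ℕ => (checkSeq (M p) j) ^ ((j:ℝ)⁻¹)) Filter.atTop

/-- Condition `(𝓜_{dc})`. -/
def Mdc (M : ℝ → ℕ → ℝ) : Prop :=
  ∀ p > (0:ℝ), ∃ C > (0:ℝ), ∃ p' > (0:ℝ), ∀ j : ℕ, M p (j+1) ≤ C ^ (j+1) * M p' j

/-- `N°_k`: maximum of `N_ℓ·N_{j₁}⋯N_{j_ℓ}` over `j_i ∈ ℕ, j₁+⋯+j_ℓ = k`; `N°₀ = 1`. -/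
def circSeq (N : ℕ → ℝ) (k : ℕ) : ℝ :=
  if k = 0 then 1 else
    sSup {x : ℝ | ∃ (l : ℕ) (js : Fin l → ℕ), (∀ i, 1 ≤ js i) ∧ (∑ i, js i) = k ∧
      x = N l * ∏ i, N (js i)}

/-- `(rai)` for a single sequence. -/
def SeqRai (N : ℕ → ℝ) : Prop :=
  ∃ C > (0:ℝ), ∀ j k : ℕ, 1 ≤ j → j ≤ k →
    (checkSeq N j) ^ ((j:ℝ)⁻¹) ≤ C * (checkSeq N k) ^ ((k:ℝ)⁻¹)

/-- `(dc)` for a single sequence. -/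
def SeqDc (N : ℕ → ℝ) : Prop := ∃ D ≥ (1:ℝ), ∀ j : ℕ, N (j+1) ≤ D ^ (j+1) * N j

/-- `(FdB)` for a single sequence. -/
def SeqFdB (N : ℕ → ℝ) : Prop :=
  ∃ C ≥ (1:ℝ), ∃ h ≥ (1:ℝ), ∀ j : ℕ, circSeq (checkSeq N) j ≤ C * h ^ j * checkSeq N j

/-- Condition `(𝓜_{FdB})`. -/
def MFdB (M : ℝ → ℕ → ℝ) : Prop :=
  ∀ p > (0:ℝ), ∃ p' > (0:ℝ), ∃ C : ℝ, ∀ k : ℕ, 1 ≤ k →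
    (circSeq (checkSeq (M p)) k / checkSeq (M p') k) ^ ((k:ℝ)⁻¹) ≤ C

/-- `L` is the log-convex minorant of `a` (within positive log-convex sequences). -/
def IsLcMinorant (a L : ℕ → ℝ) : Prop :=
  (∀ j, 0 < L j) ∧ IsLogConvexSeq L ∧ (∀ j, L j ≤ a j) ∧
    ∀ L' : ℕ → ℝ, (∀ j, 0 < L' j) → IsLogConvexSeq L' → (∀ j, L' j ≤ a j) → ∀ j, L' j ≤ L j

/-- Holomorphic closedness of a class of functions on `S_α`. -/
def HolClosed (S : Set (ℂ → ℂ)) (α : ℝ) : Prop :=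
  ∀ f ∈ S, ∀ U : Set ℂ, IsOpen U → closure (f '' Sector α) ⊆ U →
    ∀ g : ℂ → ℂ, DifferentiableOn ℂ g U → g ∘ f ∈ S

/-- Inverse closedness of a class of functions on `S_α`. -/
def InvClosed (S : Set (ℂ → ℂ)) (α : ℝ) : Prop :=
  ∀ f ∈ S, (∃ c > (0:ℝ), ∀ z ∈ Sector α, c ≤ ‖f z‖) → (fun z => (f z)⁻¹) ∈ S

/-- The class `H_{{𝓜}}(U)` for a weight matrix. -/
def HMatClass (M : ℝ → ℕ → ℝ) (U : Set ℂ) : Set (ℂ → ℂ) :=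
  {g | DifferentiableOn ℂ g U ∧ ∀ K : Set ℂ, K ⊆ U → IsCompact K →
    ∃ p > (0:ℝ), ∃ h > (0:ℝ), ∃ C : ℝ, ∀ j : ℕ, ∀ z ∈ K,
      ‖iteratedDerivWithin j g U z‖ ≤ C * h ^ j * M p j}

/-- The class `H_{{M}}(U)` for a single sequence. -/
def HSeqClass (N : ℕ → ℝ) (U : Set ℂ) : Set (ℂ → ℂ) :=
  {g | DifferentiableOn ℂ g U ∧ ∀ K : Set ℂ, K ⊆ U → IsCompact K →
    ∃ h > (0:ℝ), ∃ C : ℝ, ∀ j : ℕ, ∀ z ∈ K,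
      ‖iteratedDerivWithin j g U z‖ ≤ C * h ^ j * N j}

/-- Closedness under composition for the matrix class. -/
def CompClosedMat (M : ℝ → ℕ → ℝ) (α : ℝ) : Prop :=
  ∀ f ∈ AMatSet M α, ∀ U : Set ℂ, IsOpen U → closure (f '' Sector α) ⊆ U →
    ∀ g ∈ HMatClass M U, g ∘ f ∈ AMatSet M α

/-- Closedness under composition for a single-sequence class. -/
def CompClosedSeq (N : ℕ → ℝ) (α : ℝ) : Prop :=
  ∀ f ∈ ASet N α, ∀ U : Set ℂ, IsOpen U → closure (f '' Sector α) ⊆ U →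
    ∀ g ∈ HSeqClass N U, g ∘ f ∈ ASet N α

/-- `f` is characteristic in `A_{{L}}(S_α)`. -/
def Characteristic (L : ℕ → ℝ) (α : ℝ) (f : ℂ → ℂ) : Prop :=
  f ∈ ASet L α ∧ ∀ N : ℕ → ℝ, (∀ j, 0 < N j) → N 0 = 1 →
    f ∈ ASet N α → ASet N α ⊆ ASet L α → ASet N α = ASet L α

/-- Coefficient `2^{-n} M_n/m_n^n` of the `T_M`-transform. -/
def coefT (M : ℕ → ℝ) (n : ℕ) : ℝ := (1/2:ℝ)^n * (M n / (M (n+1) / M n) ^ n)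

/-- The sequence of quotients `m_n = M_{n+1}/M_n`. -/
def quotSeq (M : ℕ → ℝ) (n : ℕ) : ℝ := M (n+1) / M n

/-- `R_j = ∑ 2^{-n}(M_n/m_n^n) m_n^j` (as a real tsum). -/
def Rseq (M : ℕ → ℝ) (j : ℕ) : ℝ := ∑' n : ℕ, coefT M n * (quotSeq M n) ^ j

/-- The `T_M`-transform. -/
def Ttrans (M : ℕ → ℝ) (f : ℂ → ℂ) (z : ℂ) : ℂ :=
  ∑' n : ℕ, (coefT M n : ℂ) * f ((quotSeq M n : ℂ) * z)

/-- Weight function: continuous, nondecreasing, `ω(0)=0`, nonnegative, `ω(t)→∞`. -/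
def IsWeightFunction (ω : ℝ → ℝ) : Prop :=
  ContinuousOn ω (Set.Ici 0) ∧ MonotoneOn ω (Set.Ici 0) ∧ ω 0 = 0 ∧
    (∀ t ≥ (0:ℝ), 0 ≤ ω t) ∧ Filter.Tendsto ω Filter.atTop Filter.atTop

def Om0 (ω : ℝ → ℝ) : Prop := ∀ t ∈ Set.Icc (0:ℝ) 1, ω t = 0
def Om1 (ω : ℝ → ℝ) : Prop := ∃ L ≥ (1:ℝ), ∀ t ≥ (0:ℝ), ω (2*t) ≤ L * (ω t + 1)
def Om2 (ω : ℝ → ℝ) : Prop := ∃ C > (0:ℝ), ∃ t₀ : ℝ, ∀ t ≥ t₀, ω t ≤ C * t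
def Om3 (ω : ℝ → ℝ) : Prop := Real.log =o[Filter.atTop] ω
def Om4 (ω : ℝ → ℝ) : Prop := ConvexOn ℝ Set.univ (fun t => ω (Real.exp t))
def Om5 (ω : ℝ → ℝ) : Prop := ω =o[Filter.atTop] (fun t => t)
def Om6 (ω : ℝ → ℝ) : Prop := ∃ H ≥ (1:ℝ), ∀ t ≥ (0:ℝ), 2 * ω t ≤ ω (H * t) + H

/-- Condition `(α₀)` for a weight function. -/
def Alpha0 (ω : ℝ → ℝ) : Prop :=
  ∃ C ≥ (1:ℝ), ∃ t₀ ≥ (0:ℝ), ∀ lam ≥ (1:ℝ), ∀ t ≥ t₀, ω (lam * t) ≤ C * lam * ω t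

/-- The set `W₀`. -/
def InW0 (ω : ℝ → ℝ) : Prop := IsWeightFunction ω ∧ Om0 ω ∧ Om3 ω ∧ Om4 ω

/-- The set `W`. -/
def InW (ω : ℝ → ℝ) : Prop := InW0 ω ∧ Om1 ω

/-- The Legendre–Fenchel–Young conjugate `φ*_ω`. -/
def phiStar (ω : ℝ → ℝ) (x : ℝ) : ℝ :=
  sSup {r : ℝ | ∃ y : ℝ, 0 ≤ y ∧ r = x * y - ω (Real.exp y)}

/-- The weight matrix associated with `ω`: `W^{(ℓ)}_j = exp((1/ℓ)·φ*_ω(ℓj))`. -/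
def Wmat (ω : ℝ → ℝ) (ℓ : ℝ) (j : ℕ) : ℝ := Real.exp ((1/ℓ) * phiStar ω (ℓ * (j:ℝ)))

/-- The class `A_{{ω}}(S_α)`. -/
def AOmegaSet (ω : ℝ → ℝ) (α : ℝ) : Set (ℂ → ℂ) :=
  {f | DifferentiableOn ℂ f (Sector α) ∧ ∃ ℓ > (0:ℝ), ∃ C : ℝ,
    ∀ j : ℕ, ∀ z ∈ Sector α, ‖iteratedDerivWithin j f (Sector α) z‖ ≤ C * Wmat ω ℓ j}

/-- Closedness under composition for the `ω`-class. -/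
def CompClosedOmega (ω : ℝ → ℝ) (α : ℝ) : Prop :=
  ∀ f ∈ AOmegaSet ω α, ∀ U : Set ℂ, IsOpen U → closure (f '' Sector α) ⊆ U →
    ∀ g ∈ HMatClass (Wmat ω) U, g ∘ f ∈ AOmegaSet ω α

/-- One-sided matrix comparison `𝓜 {⪯} 𝓛`: `sup_{j≥1}(M^{(p)}_j/L^{(q)}_j)^{1/j} < ∞`. -/
def MatPreceq (M L : ℝ → ℕ → ℝ) : Prop :=
  ∀ p > (0:ℝ), ∃ q > (0:ℝ), ∃ C : ℝ, ∀ j : ℕ, 1 ≤ j → (M p j / L q j) ^ ((j:ℝ)⁻¹) ≤ C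

/-- `R`-equivalence of weight matrices. -/
def REquivMat (M L : ℝ → ℕ → ℝ) : Prop := MatPreceq M L ∧ MatPreceq L M

section Sequences

variable {M : ℕ → ℝ}

lemma quotSeq_pos (hMpos : ∀ j, 0 < M j) (n : ℕ) : 0 < quotSeq M n :=
  div_pos (hMpos _) (hMpos _)

lemma mul_quotSeq (hMpos : ∀ j, 0 < M j) (n : ℕ) : M n * quotSeq M n = M (n + 1) :=
  mul_div_cancel₀ _ (hMpos n).ne'

lemma monotone_quotSeq (hMpos : ∀ j, 0 < M j) (hMlc : IsLogConvexSeq M) :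
    Monotone (quotSeq M) := by
  refine monotone_nat_of_le_succ fun n => ?_
  rw [quotSeq, quotSeq, div_le_div_iff₀ (hMpos n) (hMpos (n + 1))]
  nlinarith [hMlc n]

lemma mul_quotSeq_pow_le_add (hMpos : ∀ j, 0 < M j) (hMlc : IsLogConvexSeq M) (n k : ℕ) :
    M n * quotSeq M n ^ k ≤ M (n + k) := by
  induction k with
  | zero => simp
  | succ k ih =>
    rw [← add_assoc, ← mul_quotSeq hMpos, pow_succ, ← mul_assoc]
    exact mul_le_mul ih (monotone_quotSeq hMpos hMlc (Nat.le_add_right n k))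
      (quotSeq_pos hMpos n).le (hMpos _).le

lemma le_mul_quotSeq_pow (hMpos : ∀ j, 0 < M j) (hMlc : IsLogConvexSeq M) (j k : ℕ) :
    M (j + k) ≤ M j * quotSeq M (j + k) ^ k := by
  induction k with
  | zero => simp
  | succ k ih =>
    have hq : quotSeq M (j + k) ≤ quotSeq M (j + (k + 1)) :=
      monotone_quotSeq hMpos hMlc (by omega)
    calc M (j + (k + 1)) = M (j + k) * quotSeq M (j + k) := (mul_quotSeq hMpos _).symm
      _ ≤ M j * quotSeq M (j + k) ^ k * quotSeq M (j + k) :=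
        mul_le_mul_of_nonneg_right ih (quotSeq_pos hMpos _).le
      _ = M j * quotSeq M (j + k) ^ (k + 1) := by ring
      _ ≤ M j * quotSeq M (j + (k + 1)) ^ (k + 1) := by
        have := hMpos j
        have := quotSeq_pos hMpos (j + k)
        gcongr

lemma mul_quotSeq_pow_le (hMpos : ∀ j, 0 < M j) (hMlc : IsLogConvexSeq M) (n j : ℕ) :
    M n * quotSeq M n ^ j ≤ M j * quotSeq M n ^ n := by
  have hq := (quotSeq_pos hMpos n).le
  rcases le_or_gt n j with hnj | hjn
  · obtain ⟨k, rfl⟩ := Nat.exists_eq_add_of_le hnj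
    rw [pow_add, ← mul_assoc, mul_right_comm]
    exact mul_le_mul_of_nonneg_right (mul_quotSeq_pow_le_add hMpos hMlc n k) (pow_nonneg hq _)
  · obtain ⟨k, rfl⟩ := Nat.exists_eq_add_of_le hjn.le
    rw [pow_add, mul_comm (quotSeq M (j + k) ^ j), ← mul_assoc]
    exact mul_le_mul_of_nonneg_right (le_mul_quotSeq_pow hMpos hMlc j k) (pow_nonneg hq _)

lemma coefT_mul_quotSeq_pow_le (hMpos : ∀ j, 0 < M j) (hMlc : IsLogConvexSeq M) (n j : ℕ) :
    coefT M n * quotSeq M n ^ j ≤ (1 / 2) ^ n * M j := by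
  have hqn : 0 < quotSeq M n ^ n := pow_pos (quotSeq_pos hMpos n) n
  rw [coefT, ← quotSeq, mul_assoc, div_mul_eq_mul_div]
  gcongr
  rw [div_le_iff₀ hqn]
  exact mul_quotSeq_pow_le hMpos hMlc n j

lemma coefT_mul_quotSeq_pow_self (hMpos : ∀ j, 0 < M j) (j : ℕ) :
    coefT M j * quotSeq M j ^ j = (1 / 2) ^ j * M j := by
  rw [coefT, ← quotSeq, mul_assoc, div_mul_cancel₀ _ (pow_pos (quotSeq_pos hMpos j) j).ne']

lemma coefT_mul_quotSeq_pow_pos (hMpos : ∀ j, 0 < M j) (n j : ℕ) :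
    0 < coefT M n * quotSeq M n ^ j := by
  have := quotSeq_pos hMpos n
  have := hMpos n
  unfold coefT
  positivity

lemma summable_coefT_mul_quotSeq_pow (hMpos : ∀ j, 0 < M j) (hMlc : IsLogConvexSeq M) (j : ℕ) :
    Summable fun n => coefT M n * quotSeq M n ^ j :=
  .of_nonneg_of_le
    (fun n => (coefT_mul_quotSeq_pow_pos hMpos n j).le)
    (fun n => coefT_mul_quotSeq_pow_le hMpos hMlc n j) (summable_geometric_two.mul_right _)

lemma Rseq_nonneg (hMpos : ∀ j, 0 < M j) (j : ℕ) : 0 ≤ Rseq M j :=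
  tsum_nonneg fun n => (coefT_mul_quotSeq_pow_pos hMpos n j).le

lemma Rseq_le (hMpos : ∀ j, 0 < M j) (hMlc : IsLogConvexSeq M) (j : ℕ) :
    Rseq M j ≤ 2 * M j :=
  (hasSum_geometric_two.mul_right (M j)).tsum_eq ▸
    (summable_coefT_mul_quotSeq_pow hMpos hMlc j).tsum_le_tsum
      (fun n => coefT_mul_quotSeq_pow_le hMpos hMlc n j) (summable_geometric_two.mul_right _)

lemma le_Rseq (hMpos : ∀ j, 0 < M j) (hMlc : IsLogConvexSeq M) (j : ℕ) :
    (1 / 2) ^ j * M j ≤ Rseq M j :=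
  coefT_mul_quotSeq_pow_self hMpos j ▸ (summable_coefT_mul_quotSeq_pow hMpos hMlc j).le_tsum j
    fun n _ => (coefT_mul_quotSeq_pow_pos hMpos n j).le

lemma seqEquiv_Rseq (hMpos : ∀ j, 0 < M j) (hMlc : IsLogConvexSeq M) :
    SeqEquiv (Rseq M) M := by
  refine ⟨2, two_pos, 2, two_pos, fun j => ⟨?_, ?_⟩⟩
  · have := hMpos j
    calc Rseq M j ≤ 2 * 1 ^ j * M j := by simpa using Rseq_le hMpos hMlc j
      _ ≤ 2 * 2 ^ j * M j := by gcongr; norm_num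
  · have := hMpos j
    calc M j = 1 * 2 ^ j * ((1 / 2) ^ j * M j) := by
          rw [one_mul, ← mul_assoc, ← mul_pow]
          norm_num
      _ ≤ 2 * 2 ^ j * Rseq M j := by
          gcongr
          · norm_num
          · exact le_Rseq hMpos hMlc j

end Sequences

lemma SeqEquiv.nonneg_right {a b : ℕ → ℝ} (h : SeqEquiv a b) (ha : ∀ j, 0 ≤ a j) (j : ℕ) :
    0 ≤ b j := by
  obtain ⟨A, hA, B, hB, hab⟩ := h
  exact nonneg_of_mul_nonneg_right ((ha j).trans (hab j).1) (by positivity)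

lemma SeqEquiv.mul {a b a' b' : ℕ → ℝ} (h : SeqEquiv a b) (h' : SeqEquiv a' b')
    (ha : ∀ j, 0 ≤ a j) (ha' : ∀ j, 0 ≤ a' j) :
    SeqEquiv (fun j => a j * a' j) (fun j => b j * b' j) := by
  have hb := h.nonneg_right ha
  have hb' := h'.nonneg_right ha'
  obtain ⟨A, hA, B, hB, hab⟩ := h
  obtain ⟨A', hA', B', hB', hab'⟩ := h'
  refine ⟨A * A', by positivity, B * B', by positivity, fun j => ⟨?_, ?_⟩⟩
  · calc a j * a' j ≤ (A * B ^ j * b j) * (A' * B' ^ j * b' j) :=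
          mul_le_mul (hab j).1 (hab' j).1 (ha' j) (by have := hb j; positivity)
      _ = A * A' * (B * B') ^ j * (b j * b' j) := by ring
  · calc b j * b' j ≤ (A * B ^ j * a j) * (A' * B' ^ j * a' j) :=
          mul_le_mul (hab j).2 (hab' j).2 (hb' j) (by have := ha j; positivity)
      _ = A * A' * (B * B') ^ j * (a j * a' j) := by ring

section Sector

variable {α : ℝ}

lemma isOpen_sector (hα2 : α ≤ 2) : IsOpen (Sector α) := by
  have hsub :
      Sector α = slitPlane ∩ arg ⁻¹' Set.Ioo (-(α * Real.pi / 2)) (α * Real.pi / 2) := by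
    ext z
    simp only [Sector, mem_slitPlane_iff_arg, Set.mem_inter_iff,
      Set.mem_preimage, Set.mem_Ioo, abs_lt]
    have : α * Real.pi / 2 ≤ Real.pi := by nlinarith [Real.pi_pos]
    constructor
    · rintro ⟨hz, h⟩
      exact ⟨⟨by linarith [h.2], hz⟩, h⟩
    · rintro ⟨⟨-, hz⟩, h⟩
      exact ⟨hz, h⟩
  have harg : ContinuousOn arg slitPlane := fun z hz => (continuousAt_arg hz).continuousWithinAt
  rw [hsub]
  exact harg.isOpen_inter_preimage isOpen_slitPlane isOpen_Ioo

lemma ofReal_mem_sector (hα : 0 < α) {t : ℝ} (ht : 0 < t) : (t : ℂ) ∈ Sector α := by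
  refine ⟨ofReal_ne_zero.mpr ht.ne', ?_⟩
  rw [arg_ofReal_of_nonneg ht.le, abs_zero]
  positivity

lemma ofReal_mul_mem_sector {r : ℝ} (hr : 0 < r) {z : ℂ} (hz : z ∈ Sector α) :
    (r : ℂ) * z ∈ Sector α :=
  ⟨mul_ne_zero (ofReal_ne_zero.mpr hr.ne') hz.1, by rw [arg_real_mul _ hr]; exact hz.2⟩

lemma tendsto_ofReal_mul_nhdsWithin_sector {r : ℝ} (hr : 0 < r) :
    Tendsto (fun z : ℂ => (r : ℂ) * z) (𝓝[Sector α] 0) (𝓝[Sector α] 0) := by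
  refine tendsto_nhdsWithin_iff.mpr ⟨?_, eventually_nhdsWithin_of_forall
    fun z hz => ofReal_mul_mem_sector hr hz⟩
  simpa using ((continuous_const_mul (r : ℂ)).tendsto 0).mono_left nhdsWithin_le_nhds

lemma nhdsWithin_sector_neBot (hα : 0 < α) : (𝓝[Sector α] (0 : ℂ)).NeBot := by
  have h : Tendsto (fun n : ℕ => ((1 / ((n : ℝ) + 1) : ℝ) : ℂ)) atTop (𝓝 0) := by
    rw [← ofReal_zero]
    exact (continuous_ofReal.tendsto 0).comp tendsto_one_div_add_atTop_nhds_zero_nat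
  exact mem_closure_iff_nhdsWithin_neBot.mp (mem_closure_of_tendsto h
    (Eventually.of_forall fun _ => ofReal_mem_sector hα Nat.one_div_pos_of_nat))

end Sector

lemma ASet_subset_ASet {a b : ℕ → ℝ} (ha : ∀ j, 0 ≤ a j) {A B : ℝ} (hB : 0 < B)
    (hab : ∀ j, a j ≤ A * B ^ j * b j) (α : ℝ) : ASet a α ⊆ ASet b α := by
  rintro g ⟨hg, h, hh, C, hC⟩
  refine ⟨hg, h * B, by positivity, max C 0 * A, fun j z hz => ?_⟩
  have hC0 : 0 ≤ max C 0 * h ^ j := by positivity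
  calc ‖iteratedDerivWithin j g (Sector α) z‖ ≤ C * h ^ j * a j := hC j z hz
    _ ≤ max C 0 * h ^ j * a j := by have := ha j; gcongr; exact le_max_left C 0
    _ ≤ max C 0 * h ^ j * (A * B ^ j * b j) := mul_le_mul_of_nonneg_left (hab j) hC0
    _ = max C 0 * A * (h * B) ^ j * b j := by ring

theorem characteristic_of_tendsto {P : ℕ → ℝ} {α : ℝ} (hα : 0 < α) (hP : ∀ j, 0 ≤ P j)
    {g : ℂ → ℂ} (hg : g ∈ ASet P α) {d : ℕ → ℂ}
    (hd : ∀ j, Tendsto (iteratedDerivWithin j g (Sector α)) (𝓝[Sector α] 0) (𝓝 (d j)))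
    {A B : ℝ} (hA : 0 ≤ A) (hB : 0 < B) (hPd : ∀ j, P j ≤ A * B ^ j * ‖d j‖) :
    Characteristic P α g := by
  have := nhdsWithin_sector_neBot hα
  refine ⟨hg, fun N _ _ ⟨_, h, hh, C, hC⟩ hsub =>
    hsub.antisymm (ASet_subset_ASet (A := A * C) hP (mul_pos hB hh) (fun j => ?_) α)⟩
  have hdN : ‖d j‖ ≤ C * h ^ j * N j :=
    le_of_tendsto (hd j).norm (eventually_nhdsWithin_of_forall fun z hz => hC j z hz)
  calc P j ≤ A * B ^ j * ‖d j‖ := hPd j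
    _ ≤ A * B ^ j * (C * h ^ j * N j) := by gcongr
    _ = A * C * (B * h) ^ j * N j := by ring

lemma hasDerivAt_iteratedDerivWithin {U : Set ℂ} (hU : IsOpen U) {f : ℂ → ℂ}
    (hf : DifferentiableOn ℂ f U) (j : ℕ) {w : ℂ} (hw : w ∈ U) :
    HasDerivAt (iteratedDerivWithin j f U) (iteratedDerivWithin (j + 1) f U w) w := by
  have hd := (hf.contDiffOn (n := ⊤) hU).differentiableOn_iteratedDerivWithin (m := j)
    (WithTop.coe_lt_top _) hU.uniqueDiffOn
  rw [iteratedDerivWithin_succ, derivWithin_of_isOpen hU hw]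
  exact (hd.differentiableAt (hU.mem_nhds hw)).hasDerivAt

section Ttrans

variable {M : ℕ → ℝ} {α : ℝ} {f : ℂ → ℂ}

def TtransDerivTerm (M : ℕ → ℝ) (f : ℂ → ℂ) (α : ℝ) (j n : ℕ) (z : ℂ) : ℂ :=
  ((coefT M n * quotSeq M n ^ j : ℝ) : ℂ) * iteratedDerivWithin j f (Sector α) (quotSeq M n * z)

def TtransDerivSeries (M : ℕ → ℝ) (f : ℂ → ℂ) (α : ℝ) (j : ℕ) (z : ℂ) : ℂ :=
  ∑' n, TtransDerivTerm M f α j n z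

lemma Ttrans_eq_TtransDerivSeries_zero : Ttrans M f = TtransDerivSeries M f α 0 := by
  ext z
  simp [Ttrans, TtransDerivSeries, TtransDerivTerm]

lemma norm_TtransDerivTerm_le (hMpos : ∀ j, 0 < M j) (hMlc : IsLogConvexSeq M) {j : ℕ}
    {K : ℝ} (hK : ∀ z ∈ Sector α, ‖iteratedDerivWithin j f (Sector α) z‖ ≤ K) (n : ℕ) {z : ℂ}
    (hz : z ∈ Sector α) : ‖TtransDerivTerm M f α j n z‖ ≤ (1 / 2) ^ n * (M j * K) := by
  rw [TtransDerivTerm, norm_mul, norm_real,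
    Real.norm_of_nonneg (coefT_mul_quotSeq_pow_pos hMpos n j).le, ← mul_assoc]
  exact mul_le_mul (coefT_mul_quotSeq_pow_le hMpos hMlc n j)
    (hK _ (ofReal_mul_mem_sector (quotSeq_pos hMpos n) hz)) (norm_nonneg _)
    (by have := hMpos j; positivity)

lemma norm_TtransDerivSeries_le (hMpos : ∀ j, 0 < M j) (hMlc : IsLogConvexSeq M) {j : ℕ}
    {K : ℝ} (hK : ∀ z ∈ Sector α, ‖iteratedDerivWithin j f (Sector α) z‖ ≤ K) {z : ℂ}
    (hz : z ∈ Sector α) : ‖TtransDerivSeries M f α j z‖ ≤ 2 * (M j * K) :=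
  tsum_of_norm_bounded (hasSum_geometric_two.mul_right _)
    fun n => norm_TtransDerivTerm_le hMpos hMlc hK n hz

lemma hasDerivAt_TtransDerivTerm (hMpos : ∀ j, 0 < M j) (hα2 : α ≤ 2)
    (hf : DifferentiableOn ℂ f (Sector α)) (j n : ℕ) {z : ℂ} (hz : z ∈ Sector α) :
    HasDerivAt (TtransDerivTerm M f α j n) (TtransDerivTerm M f α (j + 1) n z) z := by
  have hmz := ofReal_mul_mem_sector (quotSeq_pos hMpos n) hz
  refine (((hasDerivAt_iteratedDerivWithin (isOpen_sector hα2) hf j hmz).comp z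
    ((hasDerivAt_id z).const_mul (quotSeq M n : ℂ))).const_mul
    ((coefT M n * quotSeq M n ^ j : ℝ) : ℂ)).congr_deriv ?_
  rw [TtransDerivTerm]
  push_cast
  ring

/-- Termwise differentiation is justified by Weierstrass' theorem: on the sector the terms are
bounded by a summable geometric sequence. -/
lemma hasDerivAt_TtransDerivSeries (hMpos : ∀ j, 0 < M j) (hMlc : IsLogConvexSeq M)
    (hα2 : α ≤ 2) (hf : DifferentiableOn ℂ f (Sector α)) {j : ℕ} {K : ℝ}
    (hK : ∀ z ∈ Sector α, ‖iteratedDerivWithin j f (Sector α) z‖ ≤ K) {z : ℂ}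
    (hz : z ∈ Sector α) :
    HasDerivAt (TtransDerivSeries M f α j) (TtransDerivSeries M f α (j + 1) z) z := by
  have hS := isOpen_sector hα2
  have hdiff : ∀ n, DifferentiableOn ℂ (TtransDerivTerm M f α j n) (Sector α) := fun n w hw =>
    (hasDerivAt_TtransDerivTerm hMpos hα2 hf j n hw).differentiableAt.differentiableWithinAt
  have hu := summable_geometric_two.mul_right (M j * K)
  have hle := fun n w (hw : w ∈ Sector α) => norm_TtransDerivTerm_le hMpos hMlc hK n hw
  refine ((differentiableOn_tsum_of_summable_norm hu hdiff hS hle).differentiableAt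
    (hS.mem_nhds hz)).hasDerivAt.congr_deriv ?_
  rw [← (hasSum_deriv_of_summable_norm hu hdiff hS hle hz).tsum_eq]
  exact tsum_congr fun n => (hasDerivAt_TtransDerivTerm hMpos hα2 hf j n hz).deriv

lemma iteratedDerivWithin_Ttrans (hMpos : ∀ j, 0 < M j) (hMlc : IsLogConvexSeq M)
    (hα2 : α ≤ 2) (hf : DifferentiableOn ℂ f (Sector α))
    (hbd : ∀ j, ∃ K, ∀ z ∈ Sector α, ‖iteratedDerivWithin j f (Sector α) z‖ ≤ K) (j : ℕ) :
    Set.EqOn (iteratedDerivWithin j (Ttrans M f) (Sector α)) (TtransDerivSeries M f α j)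
      (Sector α) := by
  induction j with
  | zero =>
    intro z _
    rw [iteratedDerivWithin_zero, Ttrans_eq_TtransDerivSeries_zero (α := α)]
  | succ j ih =>
    intro z hz
    obtain ⟨K, hK⟩ := hbd j
    rw [iteratedDerivWithin_succ]
    exact ((hasDerivAt_TtransDerivSeries hMpos hMlc hα2 hf hK hz).hasDerivWithinAt.congr ih
      (ih hz)).derivWithin ((isOpen_sector hα2).uniqueDiffWithinAt hz)

theorem Ttrans_mem_ASet (hMpos : ∀ j, 0 < M j) (hMlc : IsLogConvexSeq M) (hα2 : α ≤ 2)
    {L : ℕ → ℝ} (hf : f ∈ ASet L α) : Ttrans M f ∈ ASet (fun j => L j * M j) α := by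
  obtain ⟨hfd, h, hh, C, hC⟩ := hf
  refine ⟨fun z hz => ?_, h, hh, 2 * C, fun j z hz => ?_⟩
  · rw [Ttrans_eq_TtransDerivSeries_zero]
    exact (hasDerivAt_TtransDerivSeries hMpos hMlc hα2 hfd (hC 0) hz).differentiableAt
      |>.differentiableWithinAt
  · rw [iteratedDerivWithin_Ttrans hMpos hMlc hα2 hfd (fun j => ⟨_, hC j⟩) j hz]
    calc _ ≤ 2 * (M j * (C * h ^ j * L j)) := norm_TtransDerivSeries_le hMpos hMlc (hC j) hz
      _ = 2 * C * h ^ j * (L j * M j) := by ring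

theorem tendsto_iteratedDerivWithin_Ttrans (hMpos : ∀ j, 0 < M j) (hMlc : IsLogConvexSeq M)
    (hα2 : α ≤ 2) (hf : DifferentiableOn ℂ f (Sector α))
    (hbd : ∀ j, ∃ K, ∀ z ∈ Sector α, ‖iteratedDerivWithin j f (Sector α) z‖ ≤ K)
    {j : ℕ} {c : ℂ}
    (hc : Tendsto (iteratedDerivWithin j f (Sector α)) (𝓝[Sector α] 0) (𝓝 c)) :
    Tendsto (iteratedDerivWithin j (Ttrans M f) (Sector α)) (𝓝[Sector α] 0)
      (𝓝 (Rseq M j * c)) := by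
  obtain ⟨K, hK⟩ := hbd j
  have hlim : Tendsto (TtransDerivSeries M f α j) (𝓝[Sector α] 0)
      (𝓝 (∑' n, ((coefT M n * quotSeq M n ^ j : ℝ) : ℂ) * c)) :=
    tendsto_tsum_of_dominated_convergence (summable_geometric_two.mul_right (M j * K))
      (fun n => (hc.comp (tendsto_ofReal_mul_nhdsWithin_sector (quotSeq_pos hMpos n))).const_mul _)
      (eventually_nhdsWithin_of_forall fun z hz n => norm_TtransDerivTerm_le hMpos hMlc hK n hz)
  rw [tsum_mul_right, ← ofReal_tsum] at hlim
  exact hlim.congr' (eventuallyEq_nhdsWithin_of_eqOn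
    fun z hz => (iteratedDerivWithin_Ttrans hMpos hMlc hα2 hf hbd j hz).symm)

end Ttrans

theorem stmt_5_general (M : ℕ → ℝ) (hMpos : ∀ j, 0 < M j) (hMlc : IsLogConvexSeq M)
    (L : ℕ → ℝ)
    (α : ℝ) (hα : 0 < α) (hα2 : α ≤ 2)
    (f : ℂ → ℂ) (hf : f ∈ ASet L α)
    (c : ℕ → ℂ)
    (hc : ∀ j : ℕ, Filter.Tendsto (iteratedDerivWithin j f (Sector α))
      (nhdsWithin 0 (Sector α)) (nhds (c j)))
    (hceq : SeqEquiv (fun j => ‖c j‖) L) :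
    (∀ j : ℕ, Filter.Tendsto (iteratedDerivWithin j (Ttrans M f) (Sector α))
      (nhdsWithin 0 (Sector α)) (nhds ((Rseq M j : ℂ) * c j))) ∧
    SeqEquiv (fun j => Rseq M j * ‖c j‖) (fun j => L j * M j) ∧
    Characteristic (fun j => L j * M j) α (Ttrans M f) := by
  have ⟨hfd, _, _, _, hC⟩ := hf
  have hlim : ∀ j, Tendsto (iteratedDerivWithin j (Ttrans M f) (Sector α)) (𝓝[Sector α] 0)
      (𝓝 (Rseq M j * c j)) := fun j =>
    tendsto_iteratedDerivWithin_Ttrans hMpos hMlc hα2 hfd (fun j => ⟨_, hC j⟩) (hc j)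
  have hequiv : SeqEquiv (fun j => Rseq M j * ‖c j‖) (fun j => L j * M j) := by
    simpa only [mul_comm ‖c _‖] using
      hceq.mul (seqEquiv_Rseq hMpos hMlc) (fun j => norm_nonneg _) (Rseq_nonneg hMpos)
  have hLM : ∀ j, 0 ≤ L j * M j :=
    fun j => mul_nonneg (hceq.nonneg_right (fun j => norm_nonneg _) j) (hMpos j).le
  have ⟨A, hA, B, hB, hAB⟩ := hequiv
  refine ⟨hlim, hequiv, characteristic_of_tendsto hα hLM
    (Ttrans_mem_ASet hMpos hMlc hα2 hf) hlim hA.le hB fun j => ?_⟩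
  rw [norm_mul, norm_real, Real.norm_of_nonneg (Rseq_nonneg hMpos j)]
  exact (hAB j).2

/-- if the moduli of the boundary derivatives of `f` are equivalent to `L`, then
those of `T_M(f)` (which equal `R_j·|f^{(j)}(0)|`) are equivalent to `LM`, and `T_M(f)` is
characteristic in `A_{{LM}}(S_α)`. -/
theorem stmt_5 (M : ℕ → ℝ) (hMpos : ∀ j, 0 < M j) (hM0 : M 0 = 1) (hMlc : IsLogConvexSeq M)
    (L : ℕ → ℝ) (hLpos : ∀ j, 0 < L j) (hL0 : L 0 = 1)
    (α : ℝ) (hα : 0 < α) (hα2 : α ≤ 2)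
    (f : ℂ → ℂ) (hf : f ∈ ASet L α)
    (c : ℕ → ℂ)
    (hc : ∀ j : ℕ, Filter.Tendsto (iteratedDerivWithin j f (Sector α))
      (nhdsWithin 0 (Sector α)) (nhds (c j)))
    (hceq : SeqEquiv (fun j => ‖c j‖) L) :
    (∀ j : ℕ, Filter.Tendsto (iteratedDerivWithin j (Ttrans M f) (Sector α))
      (nhdsWithin 0 (Sector α)) (nhds ((Rseq M j : ℂ) * c j))) ∧
    SeqEquiv (fun j => Rseq M j * ‖c j‖) (fun j => L j * M j) ∧
    Characteristic (fun j => L j * M j) α (Ttrans M f) :=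
  stmt_5_general M hMpos hMlc L α hα hα2 f hf c hc hceq
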